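/- arXiv:1705.08681 — 4 statements merged into one kernel-verified Lean document; each statement's English description precedes it below -/
import Mathlib

section
/- For a cycle C_n on an odd number n ≥ 3 of vertices, the fixatic number equals ⌊n/2⌋. -/
open SimpleGraph

def IsFixingSet {V : Type*} (G : SimpleGraph V) (F : Set V) : Prop :=
  ∀ φ : G ≃g G, (∀ v ∈ F, φ v = v) → ∀ v, φ v = v

noncomputable def fixingNumber {V : Type*} (G : SimpleGraph V) [Fintype V] : ℕ :=
  sInf {n | ∃ F : Finset V, F.card = n ∧ IsFixingSet G ↑F}

def IsFixaticPartition {V : Type*} [Fintype V] [DecidableEq V] (G : SimpleGraph V)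
    (P : Finpartition (Finset.univ : Finset V)) : Prop :=
  ∀ F ∈ P.parts, IsFixingSet G ↑F

noncomputable def fixaticNumber {V : Type*} (G : SimpleGraph V) [Fintype V] [DecidableEq V] : ℕ :=
  sSup {k | ∃ P : Finpartition (Finset.univ : Finset V), IsFixaticPartition G P ∧ P.parts.card = k}

/-!
Every automorphism of `C_n` is a rotation `x ↦ c + x` or a reflection `x ↦ c - x`. A rotation
fixing one vertex is the identity, and a reflection fixing `u` and `v` has `2u = c = 2v`, so
`u = v` when `n` is odd. Hence the fixing sets of an odd cycle are exactly the sets with at least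
two vertices (a single vertex is fixed by the reflection through it), and the fixatic number is
the largest number of parts of size `≥ 2` in a partition of `n` vertices, namely `⌊n/2⌋`.
-/

open Finset

namespace Finpartition

variable {α : Type*} [DecidableEq α] {s : Finset α}

theorem card_parts_mul_le_card (P : Finpartition s) {k : ℕ} (hk : ∀ p ∈ P.parts, k ≤ #p) :
    #P.parts * k ≤ #s :=
  calc #P.parts * k = ∑ _p ∈ P.parts, k := by rw [sum_const, smul_eq_mul]
    _ ≤ ∑ p ∈ P.parts, #p := sum_le_sum hk
    _ = #s := P.sum_card_parts

/-- Pairs, with one triple when `#s` is odd. -/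
theorem exists_card_parts_eq_half (s : Finset α) (hs : 2 ≤ #s) :
    ∃ P : Finpartition s, #P.parts = #s / 2 ∧ ∀ p ∈ P.parts, 2 ≤ #p := by
  induction s using Finset.strongInduction with
  | H s ih =>
  by_cases hs4 : #s < 4
  · refine ⟨indiscrete (card_pos.mp (by omega)).ne_empty, ?_, by simpa using hs⟩
    simp only [indiscrete_parts, card_singleton]
    omega
  obtain ⟨t, hts, ht⟩ := exists_subset_card_eq hs
  have htne : t.Nonempty := card_pos.mp (by omega)
  have hcard : #(s \ t) = #s - 2 := by rw [card_sdiff_of_subset hts, ht]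
  obtain ⟨P, hP, hP2⟩ := ih (s \ t) (sdiff_ssubset hts htne) (by omega)
  refine ⟨P.extend htne.ne_empty sdiff_disjoint (sdiff_union_of_subset hts), ?_, ?_⟩
  · rw [card_extend, hP, hcard]
    omega
  · simp only [extend_parts, mem_insert, forall_eq_or_imp]
    exact ⟨ht.ge, hP2⟩

end Finpartition

open Fin.CommRing

lemma Fin.two_ne_zero_of_three_le {m : ℕ} : (2 : Fin (m + 3)) ≠ 0 := by
  simp [Fin.ext_iff, Nat.mod_eq_of_lt (show 2 < m + 3 by omega)]

lemma Fin.eq_zero_of_two_mul_eq_zero {n : ℕ} [NeZero n] (hn : Odd n) {x : Fin n}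
    (h : 2 * x = 0) : x = 0 := by
  have hdvd : n ∣ 2 * x.val := by
    rw [← Fin.natCast_eq_zero]
    push_cast
    simpa using h
  have hx : n ∣ x.val := (Nat.coprime_two_right.mpr hn).dvd_of_dvd_mul_left hdvd
  exact Fin.ext (Nat.eq_zero_of_dvd_of_lt hx x.isLt)

namespace SimpleGraph

variable {m : ℕ}

lemma cycleGraph_adj_iff_eq_add_or_eq_sub {u v : Fin (m + 3)} :
    (cycleGraph (m + 3)).Adj u v ↔ v = u + 1 ∨ v = u - 1 := by
  rw [cycleGraph_adj, or_comm, sub_eq_iff_eq_add', sub_eq_iff_eq_add', eq_sub_iff_add_eq,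
    eq_comm (a := u)]

lemma cycleGraph.add_eq_of_adj_of_adj {x y z : Fin (m + 3)} (hx : (cycleGraph (m + 3)).Adj y x)
    (hz : (cycleGraph (m + 3)).Adj y z) (hxz : x ≠ z) : x + z = y + y := by
  rw [cycleGraph_adj_iff_eq_add_or_eq_sub] at hx hz
  rcases hx with rfl | rfl <;> rcases hz with rfl | rfl <;> first | exact absurd rfl hxz | ring

def cycleGraph.reflection (c : Fin (m + 3)) : cycleGraph (m + 3) ≃g cycleGraph (m + 3) where
  toFun x := c - x
  invFun x := c - x
  left_inv x := sub_sub_cancel c x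
  right_inv x := sub_sub_cancel c x
  map_rel_iff' {x y} := by
    simp only [Equiv.coe_fn_mk, cycleGraph_adj, sub_sub_sub_cancel_left]
    exact or_comm

@[simp]
lemma cycleGraph.reflection_apply (c x : Fin (m + 3)) : reflection c x = c - x := rfl

theorem cycleGraph.iso_eq_add_or_eq_sub (φ : cycleGraph (m + 3) ≃g cycleGraph (m + 3)) :
    (∀ x, φ x = φ 0 + x) ∨ ∀ x, φ x = φ 0 - x := by
  have hnbr : ∀ x, (cycleGraph (m + 3)).Adj (φ x) (φ (x + 1)) := fun x =>
    φ.map_adj_iff.mpr (cycleGraph_adj_iff_eq_add_or_eq_sub.mpr (Or.inl rfl))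
  set d := φ 1 - φ 0
  -- `φ k` and `φ (k + 2)` are the two distinct neighbours of `φ (k + 1)`, so the steps agree.
  have hstep : ∀ k : ℕ, φ (k + 1) = φ k + d := by
    intro k
    induction k with
    | zero => simp [d]
    | succ k ih =>
      have hne : (k : Fin (m + 3)) ≠ k + 1 + 1 := fun h => Fin.two_ne_zero_of_three_le <| by
        linear_combination -h
      have := cycleGraph.add_eq_of_adj_of_adj (hnbr k).symm (hnbr (k + 1)) (φ.injective.ne hne)
      push_cast
      linear_combination this + ih
  have hlin : ∀ k : ℕ, φ k = φ 0 + d * k := by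
    intro k
    induction k with
    | zero => simp
    | succ k ih =>
      push_cast
      rw [hstep, ih]
      ring
  have hx : ∀ x, φ x = φ 0 + d * x := fun x => by simpa using hlin x.val
  rcases cycleGraph_adj_iff_eq_add_or_eq_sub.mp (hnbr 0) with h | h <;> rw [zero_add] at h
  · left
    simpa [d, h] using hx
  · right
    simpa [d, h, sub_eq_add_neg] using hx

theorem cycleGraph.two_le_card_of_isFixingSet {F : Finset (Fin (m + 3))}
    (hF : IsFixingSet (cycleGraph (m + 3)) F) : 2 ≤ #F := by
  by_contra! hF1
  obtain ⟨u, hu⟩ := card_le_one_iff_subset_singleton.mp (by omega : #F ≤ 1)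
  have hfix := hF (reflection (u + u)) (fun v hv => by simp [mem_singleton.mp (hu hv)]) (u + 1)
  rw [reflection_apply] at hfix
  exact Fin.two_ne_zero_of_three_le (by linear_combination -hfix)

theorem cycleGraph.isFixingSet_of_two_le_card (hodd : Odd (m + 3)) {F : Finset (Fin (m + 3))}
    (hF : 2 ≤ #F) : IsFixingSet (cycleGraph (m + 3)) F := by
  obtain ⟨u, hu, v, hv, huv⟩ := one_lt_card.mp hF
  intro φ hφ
  have hu' := hφ u hu
  have hv' := hφ v hv
  rcases iso_eq_add_or_eq_sub φ with hrot | hrefl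
  · have h0 : φ 0 = 0 := by linear_combination hu' - hrot u
    simpa [h0] using hrot
  · refine absurd (sub_eq_zero.mp (Fin.eq_zero_of_two_mul_eq_zero hodd ?_)) huv
    linear_combination hrefl u - hu' - hrefl v + hv'

theorem cycleGraph.isFixingSet_iff (hodd : Odd (m + 3)) {F : Finset (Fin (m + 3))} :
    IsFixingSet (cycleGraph (m + 3)) F ↔ 2 ≤ #F :=
  ⟨two_le_card_of_isFixingSet, isFixingSet_of_two_le_card hodd⟩

end SimpleGraph

theorem stmt8 (n : ℕ) (hn : 3 ≤ n) (hodd : Odd n) :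
    fixaticNumber (SimpleGraph.cycleGraph n) = n / 2 := by
  obtain ⟨m, rfl⟩ : ∃ m, n = m + 3 := ⟨n - 3, by omega⟩
  refine IsGreatest.csSup_eq ⟨?_, ?_⟩
  · obtain ⟨P, hcard, hP⟩ := Finpartition.exists_card_parts_eq_half (univ : Finset (Fin (m + 3)))
      (by simp)
    exact ⟨P, fun p hp => (cycleGraph.isFixingSet_iff hodd).mpr (hP p hp), by simpa using hcard⟩
  · rintro k ⟨P, hP, rfl⟩
    have := P.card_parts_mul_le_card fun p hp => (cycleGraph.isFixingSet_iff hodd).mp (hP p hp)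
    rw [card_univ, Fintype.card_fin] at this
    omega
end

section
/- For the path P_{2k} on an even number 2k of vertices (k ≥ 1), the fixatic number equals 2k, i.e., the partition of the vertex set into singletons is a fixatic partition. -/
/-!
An automorphism of a path sends consecutive vertices to consecutive vertices injectively, so
it is affine of slope `±1` on the indices, hence the identity or the reversal `i ↦ n - 1 - i`.
The reversal of a path with an even number of vertices has no fixed vertex, so any single
vertex is a fixing set, and the partition into singletons is fixatic with the largest possible
number of classes.
-/

open SimpleGraph

theorem eq_add_mul_of_injOn_of_abs_sub_eq_one {f : ℕ → ℤ} {n : ℕ}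
    (hinj : Set.InjOn f (Set.Iio n)) (hstep : ∀ i, i + 1 < n → |f (i + 1) - f i| = 1) :
    ∀ i < n, f i = f 0 + i * (f 1 - f 0) := by
  intro i hi
  induction i using Nat.strong_induction_on with
  | _ i ih =>
    match i, ih with
    | 0, _ => simp
    | 1, _ => simp
    | j + 2, ih =>
      have hj1 := ih (j + 1) (by omega) (by omega)
      have hj := ih j (by omega) (by omega)
      have hsame : |f (j + 2) - f (j + 1)| = |f (j + 1) - f j| := by
        rw [hstep (j + 1) hi, hstep j (by omega)]
      rcases abs_eq_abs.mp hsame with h | h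
      · push_cast at hj1 ⊢
        linear_combination h + 2 * hj1 - hj
      -- a step back would revisit `f j`, contradicting injectivity
      · have : j + 2 = j := hinj (by simp; omega) (by simp; omega) (by linarith)
        omega

theorem pathGraph_iso_eq_id_or_rev {n : ℕ} (φ : pathGraph n ≃g pathGraph n) :
    (∀ i, φ i = i) ∨ ∀ i, φ i = i.rev := by
  rcases Nat.lt_or_ge n 2 with hn | hn
  · left; intro i; ext; omega
  let g : ℕ → ℤ := fun i => if h : i < n then (φ ⟨i, h⟩ : ℕ) else 0
  have hg : ∀ i : Fin n, g i = φ i := fun i => by simp [g]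
  have hinj : Set.InjOn g (Set.Iio n) := by
    intro i hi j hj hij
    simp only [Set.mem_Iio] at hi hj
    have : φ ⟨i, hi⟩ = φ ⟨j, hj⟩ := Fin.ext (by simpa [g, hi, hj] using hij)
    exact congrArg Fin.val (φ.injective this)
  have hstep : ∀ i, i + 1 < n → |g (i + 1) - g i| = 1 := by
    intro i hi
    have hadj : (pathGraph n).Adj (φ ⟨i, by omega⟩) (φ ⟨i + 1, hi⟩) :=
      φ.map_adj_iff.mpr (pathGraph_adj.mpr (Or.inl rfl))
    rw [pathGraph_adj] at hadj
    simp only [g, dif_pos hi, dif_pos (show i < n by omega)]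
    rw [abs_eq zero_le_one]
    omega
  have haff := eq_add_mul_of_injOn_of_abs_sub_eq_one hinj hstep
  have hbound : ∀ i : Fin n, 0 ≤ g i ∧ g i ≤ n - 1 := fun i => by
    rw [hg]; have := (φ i).isLt; omega
  -- `g 0` and `g (n - 1)` both lie in `[0, n - 1]` and differ by `n - 1`, so they are endpoints
  have h0 := hbound ⟨0, by omega⟩
  have hlast := hbound ⟨n - 1, by omega⟩
  have hends := haff (n - 1) (by omega)
  simp only [Nat.cast_sub (show 1 ≤ n by omega)] at h0 hlast hends
  rcases (abs_eq zero_le_one).mp (hstep 0 (by omega)) with hd | hd <;>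
    rw [zero_add] at hd <;> rw [hd] at hends
  · refine Or.inl fun i => Fin.ext ?_
    have := haff i i.isLt
    rw [hd, hg] at this
    omega
  · refine Or.inr fun i => Fin.ext ?_
    have := haff i i.isLt
    rw [hd, hg] at this
    rw [Fin.val_rev]
    omega

theorem pathGraph_isFixingSet_singleton {n : ℕ} (hn : Even n) (v : Fin n) :
    IsFixingSet (pathGraph n) {v} := by
  intro φ hfix
  refine (pathGraph_iso_eq_id_or_rev φ).resolve_right fun hrev => ?_
  have hv : (v.rev : ℕ) = v := by rw [← hrev, hfix v rfl]
  obtain ⟨m, rfl⟩ := hn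
  rw [Fin.val_rev] at hv
  omega

theorem isFixaticPartition_bot {V : Type*} [Fintype V] [DecidableEq V] {G : SimpleGraph V}
    (hG : ∀ v, IsFixingSet G {v}) : IsFixaticPartition G ⊥ := by
  intro F hF
  obtain ⟨v, -, rfl⟩ := Finpartition.mem_bot_iff.mp hF
  simpa using hG v

theorem fixaticNumber_eq_card_of_isFixingSet_singleton {V : Type*} [Fintype V] [DecidableEq V]
    {G : SimpleGraph V} (hG : ∀ v, IsFixingSet G {v}) : fixaticNumber G = Fintype.card V := by
  refine IsGreatest.csSup_eq ⟨⟨⊥, isFixaticPartition_bot hG, ?_⟩, ?_⟩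
  · rw [Finpartition.card_bot, Finset.card_univ]
  · rintro _ ⟨P, -, rfl⟩
    exact P.card_parts_le_card

theorem stmt12_general (k : ℕ) :
    (∀ v : Fin (2 * k), IsFixingSet (SimpleGraph.pathGraph (2 * k)) {v}) ∧
      fixaticNumber (SimpleGraph.pathGraph (2 * k)) = 2 * k := by
  have hsingle := pathGraph_isFixingSet_singleton (even_two_mul k)
  exact ⟨hsingle, by rw [fixaticNumber_eq_card_of_isFixingSet_singleton hsingle, Fintype.card_fin]⟩

theorem stmt12 (k : ℕ) (hk : 1 ≤ k) :
    (∀ v : Fin (2 * k), IsFixingSet (SimpleGraph.pathGraph (2 * k)) {v}) ∧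
      fixaticNumber (SimpleGraph.pathGraph (2 * k)) = 2 * k :=
  stmt12_general k
end

section
/- For the star K_{1,3}, the fixatic number equals 1 while fix(K_{1,3}) = 2 = ⌊4/2⌋; in particular F_xt(G)=1 does not imply fix(G) > ⌊n/2⌋. -/
open SimpleGraph

/-!
Swapping two leaves of `K_{1,3}` is an automorphism, so a fixing set misses at most one leaf.
Two leaves therefore already form a minimum fixing set: they pin the centre, the only neighbour
of a leaf, and then the last leaf is pinned by injectivity. A leaf outside one of two disjoint
fixing sets forces the other two leaves into that set, so the second set would miss both.
-/

section FixingSet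

variable {V : Type*} {G : SimpleGraph V}

lemma isFixingSet_univ (G : SimpleGraph V) : IsFixingSet G Set.univ :=
  fun _ hφ v ↦ hφ v trivial

lemma IsFixingSet.exists_mem_apply_ne {F : Set V} (hF : IsFixingSet G F) (φ : G ≃g G) {v : V}
    (hv : φ v ≠ v) : ∃ u ∈ F, φ u ≠ u := by
  by_contra! h
  exact hv (hF φ h v)

lemma fixingNumber_le [Fintype V] {F : Finset V} (hF : IsFixingSet G F) :
    fixingNumber G ≤ F.card :=
  Nat.sInf_le ⟨F, rfl, hF⟩

lemma le_fixingNumber [Fintype V] {n : ℕ} (h : ∀ F : Finset V, IsFixingSet G F → n ≤ F.card) :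
    n ≤ fixingNumber G :=
  le_csInf ⟨_, Finset.univ, rfl, by simpa using isFixingSet_univ G⟩ (by
    rintro _ ⟨F, rfl, hF⟩
    exact h F hF)

lemma fixaticNumber_eq_one [Fintype V] [DecidableEq V] [Nonempty V]
    (h : ∀ F₁ F₂ : Finset V, IsFixingSet G F₁ → IsFixingSet G F₂ → ¬ Disjoint F₁ F₂) :
    fixaticNumber G = 1 := by
  have hle : ∀ P : Finpartition (Finset.univ : Finset V), IsFixaticPartition G P →
      P.parts.card ≤ 1 := by
    intro P hP
    refine Finset.card_le_one.mpr fun F₁ h₁ F₂ h₂ ↦ ?_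
    by_contra hne
    exact h F₁ F₂ (hP F₁ h₁) (hP F₂ h₂) (P.disjoint h₁ h₂ hne)
  have hone : 1 ∈ {k | ∃ P : Finpartition (Finset.univ : Finset V),
      IsFixaticPartition G P ∧ P.parts.card = k} := by
    refine ⟨Finpartition.indiscrete Finset.univ_nonempty.ne_empty, ?_, by simp⟩
    intro F hF
    rw [Finpartition.indiscrete_parts, Finset.mem_singleton] at hF
    simpa [hF] using isFixingSet_univ G
  refine le_antisymm (csSup_le ⟨1, hone⟩ ?_) (le_csSup ⟨1, ?_⟩ hone) <;>
  · rintro _ ⟨P, hP, rfl⟩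
    exact hle P hP

end FixingSet

lemma eq_of_forall_ne_apply_eq {α : Type*} {f : α → α} (hf : f.Injective) {v : α}
    (h : ∀ u ≠ v, f u = u) : f v = v := by
  by_contra hv
  exact hv (hf (h (f v) hv))

namespace CompleteBipartite

variable {V W : Type*}

lemma inr_mem_or_inr_mem {F : Set (V ⊕ W)} (hF : IsFixingSet (completeBipartiteGraph V W) F)
    {i j : W} (hij : i ≠ j) : Sum.inr i ∈ F ∨ Sum.inr j ∈ F := by
  classical
  obtain ⟨u, huF, hu⟩ := hF.exists_mem_apply_ne
    (completeBipartiteGraphCongr (Equiv.refl V) (Equiv.swap i j)) (v := Sum.inr i)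
    (by simpa using hij.symm)
  rcases u with u | u
  · simp at hu
  · obtain rfl | rfl : u = i ∨ u = j := by
      by_contra! h
      exact hu (by simp [Equiv.swap_apply_of_ne_of_ne h.1 h.2])
    exacts [.inl huF, .inr huF]

lemma card_right_le_card_add_one [Fintype W] {F : Finset (V ⊕ W)}
    (hF : IsFixingSet (completeBipartiteGraph V W) F) : Fintype.card W ≤ F.card + 1 := by
  classical
  set S := F.preimage Sum.inr Sum.inr_injective.injOn
  have hS : S.card ≤ F.card := by
    simpa using Finset.card_le_card_of_injOn Sum.inr (fun w hw ↦ by simpa [S] using hw)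
      Sum.inr_injective.injOn
  have hSc : Sᶜ.card ≤ 1 := Finset.card_le_one.mpr fun i hi j hj ↦ by
    by_contra hij
    simp only [S, Finset.mem_compl, Finset.mem_preimage] at hi hj
    exact (inr_mem_or_inr_mem hF hij).elim hi hj
  have := Finset.card_add_card_compl S
  omega

lemma not_disjoint_of_isFixingSet {F₁ F₂ : Finset (V ⊕ W)}
    (h₁ : IsFixingSet (completeBipartiteGraph V W) F₁)
    (h₂ : IsFixingSet (completeBipartiteGraph V W) F₂) {a b c : W}
    (hab : a ≠ b) (hbc : b ≠ c) (hac : a ≠ c) : ¬ Disjoint F₁ F₂ := by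
  intro hd
  wlog ha : Sum.inr a ∉ F₁ generalizing F₁ F₂
  · exact this h₂ h₁ hd.symm (Finset.disjoint_left.mp hd (not_not.mp ha))
  have hb : Sum.inr b ∈ F₁ := (inr_mem_or_inr_mem h₁ hab).resolve_left ha
  have hc : Sum.inr c ∈ F₁ := (inr_mem_or_inr_mem h₁ hac).resolve_left ha
  exact (inr_mem_or_inr_mem h₂ hbc).elim (Finset.disjoint_left.mp hd hb)
    (Finset.disjoint_left.mp hd hc)

lemma isFixingSet_of_forall_ne [Subsingleton V] {F : Set (V ⊕ W)} {w₀ w₁ : W} (h₁₀ : w₁ ≠ w₀)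
    (hF : ∀ w ≠ w₀, Sum.inr w ∈ F) : IsFixingSet (completeBipartiteGraph V W) F := by
  intro φ hφ
  have hcentre (c : V) : φ (Sum.inl c) = Sum.inl c := by
    have hadj := φ.map_adj_iff.mpr
      (show (completeBipartiteGraph V W).Adj (Sum.inl c) (Sum.inr w₁) by simp)
    rw [hφ _ (hF w₁ h₁₀)] at hadj
    rcases hc : φ (Sum.inl c) with c' | _
    · rw [Subsingleton.elim c' c]
    · simp [hc] at hadj
  have hrest : ∀ u ≠ Sum.inr w₀, φ u = u := by
    rintro (c | w) hu
    · exact hcentre c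
    · exact hφ _ (hF w fun h ↦ hu (h ▸ rfl))
  intro v
  by_cases hv : v = Sum.inr w₀
  · exact hv ▸ eq_of_forall_ne_apply_eq φ.injective hrest
  · exact hrest v hv

end CompleteBipartite

theorem stmt13 :
    fixaticNumber (completeBipartiteGraph (Fin 1) (Fin 3)) = 1 ∧
      fixingNumber (completeBipartiteGraph (Fin 1) (Fin 3)) = 2 ∧
      ¬ fixingNumber (completeBipartiteGraph (Fin 1) (Fin 3)) >
        Fintype.card (Fin 1 ⊕ Fin 3) / 2 := by
  have hfix : fixingNumber (completeBipartiteGraph (Fin 1) (Fin 3)) = 2 := by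
    refine le_antisymm ?_ (le_fixingNumber fun F hF ↦ by
      simpa using CompleteBipartite.card_right_le_card_add_one hF)
    refine fixingNumber_le (F := {Sum.inr 0, Sum.inr 1}) ?_
    exact CompleteBipartite.isFixingSet_of_forall_ne (w₀ := 2) (w₁ := 0) (by decide) (by decide)
  refine ⟨fixaticNumber_eq_one fun F₁ F₂ h₁ h₂ ↦ ?_, hfix, by simp [hfix]⟩
  exact CompleteBipartite.not_disjoint_of_isFixingSet h₁ h₂ (a := 0) (b := 1) (c := 2)
    (by decide) (by decide) (by decide)
end

section
/- For any two finite connected graphs G₁ and G₂, fix(G₁ + G₂) ≥ fix(G₁) + fix(G₂), where G₁ + G₂ denotes the join. -/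
/-
An automorphism of either factor, extended by the identity on the other factor, is an
automorphism of the join. Hence a fixing set `F` of `G₁ + G₂` restricts to fixing sets of `G₁` and
of `G₂`, and these restrictions partition `F`.
-/

open SimpleGraph

def joinGraph {V₁ V₂ : Type*} (G₁ : SimpleGraph V₁) (G₂ : SimpleGraph V₂) :
    SimpleGraph (V₁ ⊕ V₂) where
  Adj x y :=
    match x, y with
    | .inl a, .inl b => G₁.Adj a b
    | .inr a, .inr b => G₂.Adj a b
    | .inl _, .inr _ => True
    | .inr _, .inl _ => True
  symm := by
    constructor
    rintro (a | a) (b | b) h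
    · exact G₁.adj_symm h
    · trivial
    · trivial
    · exact G₂.adj_symm h
  loopless := by
    constructor
    rintro (a | a) h
    · exact G₁.irrefl h
    · exact G₂.irrefl h

section Join

variable {V₁ V₂ W₁ W₂ : Type*} {G₁ : SimpleGraph V₁} {G₂ : SimpleGraph V₂}
  {H₁ : SimpleGraph W₁} {H₂ : SimpleGraph W₂}

def SimpleGraph.Iso.joinGraphCongr (φ₁ : G₁ ≃g H₁) (φ₂ : G₂ ≃g H₂) :
    joinGraph G₁ G₂ ≃g joinGraph H₁ H₂ where
  toEquiv := Equiv.sumCongr φ₁.toEquiv φ₂.toEquiv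
  map_rel_iff' := by
    rintro (a | a) (b | b) <;> simp [joinGraph, φ₁.map_rel_iff, φ₂.map_rel_iff]

theorem IsFixingSet.toLeft_and_toRight {F : Finset (V₁ ⊕ V₂)}
    (hF : IsFixingSet (joinGraph G₁ G₂) ↑F) :
    IsFixingSet G₁ ↑F.toLeft ∧ IsFixingSet G₂ ↑F.toRight := by
  have fixes_both (φ₁ : G₁ ≃g G₁) (φ₂ : G₂ ≃g G₂) (h₁ : ∀ a ∈ F.toLeft, φ₁ a = a)
      (h₂ : ∀ b ∈ F.toRight, φ₂ b = b) : (∀ a, φ₁ a = a) ∧ ∀ b, φ₂ b = b := by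
    have hφ := hF (φ₁.joinGraphCongr φ₂) <| by
      rintro (a | b) hv
      · simpa [Iso.joinGraphCongr] using h₁ a (Finset.mem_toLeft.mpr hv)
      · simpa [Iso.joinGraphCongr] using h₂ b (Finset.mem_toRight.mpr hv)
    exact ⟨fun a => by simpa [Iso.joinGraphCongr] using hφ (.inl a),
      fun b => by simpa [Iso.joinGraphCongr] using hφ (.inr b)⟩
  exact ⟨fun φ h => (fixes_both φ (Iso.refl) h (by simp)).1,
    fun φ h => (fixes_both (Iso.refl) φ (by simp) h).2⟩

end Join

section FixingNumber

variable {V : Type*} [Fintype V]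

theorem fixingNumber_le_card {G : SimpleGraph V} {F : Finset V} (hF : IsFixingSet G ↑F) :
    fixingNumber G ≤ F.card :=
  Nat.sInf_le ⟨F, rfl, hF⟩

theorem exists_isFixingSet_card_eq_fixingNumber (G : SimpleGraph V) :
    ∃ F : Finset V, F.card = fixingNumber G ∧ IsFixingSet G ↑F :=
  Nat.sInf_mem (s := {n | ∃ F : Finset V, F.card = n ∧ IsFixingSet G ↑F})
    ⟨_, Finset.univ, rfl, fun _ h v => h v (Finset.mem_univ v)⟩

end FixingNumber

theorem stmt14_general {V₁ V₂ : Type*} [Fintype V₁] [Fintype V₂]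
    (G₁ : SimpleGraph V₁) (G₂ : SimpleGraph V₂) :
    fixingNumber (joinGraph G₁ G₂) ≥ fixingNumber G₁ + fixingNumber G₂ := by
  obtain ⟨F, hcard, hF⟩ := exists_isFixingSet_card_eq_fixingNumber (joinGraph G₁ G₂)
  obtain ⟨hleft, hright⟩ := hF.toLeft_and_toRight
  calc fixingNumber G₁ + fixingNumber G₂
      ≤ F.toLeft.card + F.toRight.card :=
        add_le_add (fixingNumber_le_card hleft) (fixingNumber_le_card hright)
    _ = fixingNumber (joinGraph G₁ G₂) := by rw [Finset.card_toLeft_add_card_toRight, hcard]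

theorem stmt14 {V₁ V₂ : Type*} [Fintype V₁] [Fintype V₂]
    (G₁ : SimpleGraph V₁) (G₂ : SimpleGraph V₂)
    (h₁ : G₁.Connected) (h₂ : G₂.Connected) :
    fixingNumber (joinGraph G₁ G₂) ≥ fixingNumber G₁ + fixingNumber G₂ :=
  stmt14_general G₁ G₂
end
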